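/- arXiv:1706.09866 — 2 statements merged into one kernel-verified Lean document; each statement's English description precedes it below -/
import Mathlib

section
/- Let I be a nearly complete intersection (NCI) squarefree monomial ideal in S. If m_1 and m_2 are two distinct minimal monomial generators of I, then their greatest common divisor has degree at most 1; equivalently, m_1 and m_2 have at most one variable in common. -/
open CategoryTheory MvPolynomial

noncomputable section

/-- `dim_k Tor_i^R(M, R/mx)` : the `i`-th Betti number of the `R`-module `M`, where `R` is a
`k`-algebra and `mx` is (the analogue of) the irrelevant maximal ideal, so that `R ⧸ mx ≅ k`. -/
def bettiGen (k : Type) [Field k] (R : Type) [CommRing R] [Algebra k R]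
    (mx : Ideal R) (M : ModuleCat R) (i : ℕ) : ℕ :=
  Module.finrank k
    (RestrictScalars k R (((Tor (ModuleCat R) i).obj M).obj (ModuleCat.of R (R ⧸ mx))))

/-- The irrelevant maximal ideal `(x_1, …, x_m)` of `S = k[x_1, …, x_m]`. -/
def irrel (k : Type) [Field k] (m : ℕ) : Ideal (MvPolynomial (Fin m) k) :=
  Ideal.span (Set.range (X : Fin m → MvPolynomial (Fin m) k))

/-- `β_i(S/I) = dim_k Tor_i^S(S/I, k)` for an ideal `I ⊆ S = k[x_1, …, x_m]`. -/
def betti (k : Type) [Field k] (m : ℕ) (I : Ideal (MvPolynomial (Fin m) k)) (i : ℕ) : ℕ :=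
  bettiGen k (MvPolynomial (Fin m) k) (irrel k m)
    (ModuleCat.of _ (MvPolynomial (Fin m) k ⧸ I)) i

/-- `β(S/I) = Σ_i β_i(S/I)`, the (finite) total Betti number, valued in `ℕ∞`. -/
def bettiSum (k : Type) [Field k] (m : ℕ) (I : Ideal (MvPolynomial (Fin m) k)) : ℕ∞ :=
  ∑' i, (betti k m I i : ℕ∞)

/-- The (Krull) height of an ideal: the infimum of the heights of primes containing it. -/
def idealHeight {R : Type} [CommRing R] (I : Ideal R) : ℕ∞ :=
  ⨅ (P : PrimeSpectrum R) (_ : I ≤ P.asIdeal), Order.height P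

/-- An ideal is a complete intersection iff it can be generated by a regular sequence. -/
def IsCI {R : Type} [CommRing R] (I : Ideal R) : Prop :=
  ∃ rs : List R, RingTheory.Sequence.IsRegular R rs ∧ I = Ideal.span {r | r ∈ rs}

/-- A monomial ideal: an ideal generated by monomials. -/
def IsMonomialIdeal {k : Type} [Field k] {m : ℕ} (I : Ideal (MvPolynomial (Fin m) k)) : Prop :=
  ∃ A : Set (Fin m →₀ ℕ), I = Ideal.span ((fun a => monomial a (1 : k)) '' A)

/-- A squarefree monomial ideal: an ideal generated by squarefree monomials. -/
def IsSqFreeMonomialIdeal {k : Type} [Field k] {m : ℕ}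
    (I : Ideal (MvPolynomial (Fin m) k)) : Prop :=
  ∃ A : Set (Fin m →₀ ℕ), (∀ a ∈ A, ∀ j, a j ≤ 1) ∧
    I = Ideal.span ((fun a => monomial a (1 : k)) '' A)

/-- `a` is (the exponent vector of) a minimal monomial generator of the monomial ideal `I`:
the monomial `x^a` lies in `I` but no proper monomial divisor of it does. -/
def IsMinGen {k : Type} [Field k] {m : ℕ} (I : Ideal (MvPolynomial (Fin m) k))
    (a : Fin m →₀ ℕ) : Prop :=
  (monomial a (1 : k)) ∈ I ∧
    ∀ j, a j ≠ 0 → (monomial (a - Finsupp.single j 1) (1 : k)) ∉ I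

/-- The total degree of the monomial with exponent vector `a`. -/
def expDeg {m : ℕ} (a : Fin m →₀ ℕ) : ℕ := a.sum fun _ e => e

/-- The variable `x` lies in the support of the monomial ideal `I`, i.e. it divides some
minimal monomial generator of `I`. -/
def InSupport {k : Type} [Field k] {m : ℕ} (I : Ideal (MvPolynomial (Fin m) k))
    (x : Fin m) : Prop :=
  ∃ a, IsMinGen I a ∧ a x ≠ 0

/-- `I(x=1)` : the ideal generated by the monomials obtained from the minimal monomial
generators of `I` by substituting `1` for the variable `x`. -/
def subOne {k : Type} [Field k] {m : ℕ} (I : Ideal (MvPolynomial (Fin m) k))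
    (x : Fin m) : Ideal (MvPolynomial (Fin m) k) :=
  Ideal.span ((fun a => monomial (a.erase x) (1 : k)) '' {a | IsMinGen I a})

/-- A nearly complete intersection (NCI): a squarefree monomial ideal, generated in degree
at least two, which is not a CI, but such that `I(x=1)` is a CI for every variable `x`
in the support of `I`. -/
def IsNCI {k : Type} [Field k] {m : ℕ} (I : Ideal (MvPolynomial (Fin m) k)) : Prop :=
  IsSqFreeMonomialIdeal I ∧ (∀ a, IsMinGen I a → 2 ≤ expDeg a) ∧ ¬ IsCI I ∧
    ∀ x, InSupport I x → IsCI (subOne I x)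

/-! If two minimal generators `a ≠ b` of the NCI `I` shared two variables `x ≠ y`, then `a/x` and
`b/x` would be distinct minimal generators of the complete intersection `I(x=1)` still sharing `y`.
That is impossible for a monomial ideal `J` generated by a regular sequence `r`: write
`x^u = ∑ aᵢ rᵢ`, `x^v = ∑ bᵢ rᵢ` and let `g = gcd(u, v)`. Then `x^(v-g) x^u = x^(u-g) x^v` makes
`x^(v-g) aᵢ - x^(u-g) bᵢ` a syzygy of `r`, so its coefficients lie in `J`. Some `aᵢ` has a nonzero
constant term, since `x^u` is not in `(x_1, …, x_m) J`; then the monomial `x^(v-g)` occurs in a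
polynomial of `J`, so it is divisible by a generator, necessarily `x^v`, although `y` divides `x^g`.
-/

open RingTheory.Sequence

theorem Ideal.ofList_ofFn {R : Type*} [CommSemiring R] {n : ℕ} (r : Fin n → R) :
    Ideal.ofList (List.ofFn r) = Ideal.span (Set.range r) := by
  ext; simp [Ideal.ofList, List.mem_ofFn, Set.range]

theorem IsCI.exists_isWeaklyRegular_ofFn {R : Type} [CommRing R] {I : Ideal R} (hI : IsCI I) :
    ∃ (n : ℕ) (r : Fin n → R),
      IsWeaklyRegular R (List.ofFn r) ∧ I = Ideal.span (Set.range r) := by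
  obtain ⟨rs, hrs, rfl⟩ := hI
  exact ⟨rs.length, rs.get, by rw [List.ofFn_get]; exact hrs.toIsWeaklyRegular,
    by rw [Set.range_list_get]⟩

theorem mem_span_range_of_sum_mul_eq_zero {R : Type*} [CommRing R] :
    ∀ {n : ℕ} (r : Fin n → R), IsWeaklyRegular R (List.ofFn r) →
      ∀ c : Fin n → R, ∑ i, c i * r i = 0 → ∀ i, c i ∈ Ideal.span (Set.range r)
  | 0, _, _, _, _, i => i.elim0
  | n + 1, r, hr, c, hc, i => by
    rw [List.ofFn_succ', List.concat_eq_append, isWeaklyRegular_append_iff,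
      isWeaklyRegular_singleton_iff, Ideal.ofList_ofFn, Ideal.smul_eq_mul, Ideal.mul_top] at hr
    obtain ⟨hr', hlast⟩ := hr
    set J' := Ideal.span (Set.range fun i : Fin n => r i.castSucc)
    rw [Fin.sum_univ_castSucc] at hc
    have hJ'_le : J' ≤ Ideal.span (Set.range r) :=
      Ideal.span_mono (Set.range_comp_subset_range _ _)
    have hc_last : c (Fin.last n) ∈ J' := by
      refine mem_of_isSMulRegular_quotient_of_smul_mem hlast ?_
      rw [smul_eq_mul, mul_comm, eq_neg_of_add_eq_zero_right hc]
      exact neg_mem (Ideal.sum_mem _ fun i _ =>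
        Ideal.mul_mem_left _ _ (Ideal.subset_span ⟨i, rfl⟩))
    obtain ⟨d, hd⟩ := (Submodule.mem_span_range_iff_exists_fun R).mp hc_last
    -- Moving `d j * r_last` from the last coefficient to the `j`-th gives a syzygy of the
    -- shorter sequence.
    have hc' : ∀ j : Fin n, c j.castSucc + d j * r (Fin.last n) ∈ J' := by
      refine mem_span_range_of_sum_mul_eq_zero _ hr' _ ?_
      simp only [add_mul, Finset.sum_add_distrib, mul_right_comm _ (r (Fin.last n)),
        ← Finset.sum_mul]
      simpa only [smul_eq_mul, ← hd, mul_comm (r (Fin.last n))] using hc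
    refine Fin.lastCases (hJ'_le hc_last) (fun j => ?_) i
    rw [← add_sub_cancel_right (c j.castSucc) (d j * r (Fin.last n))]
    exact sub_mem (hJ'_le (hc' j)) (Ideal.mul_mem_left _ _ (Ideal.subset_span ⟨_, rfl⟩))

namespace MvPolynomial

variable {σ R : Type*} [CommRing R]

theorem monomial_mem_span_monomial_image_iff [Nontrivial R] {G : Set (σ →₀ ℕ)}
    {u : σ →₀ ℕ} :
    monomial u (1 : R) ∈ Ideal.span ((fun a => monomial a (1 : R)) '' G) ↔
      ∃ w ∈ G, w ≤ u := by
  classical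
  simp [mem_ideal_span_monomial_image, support_monomial]

theorem mem_idealOfVars_of_constantCoeff_eq_zero {p : MvPolynomial σ R}
    (hp : constantCoeff p = 0) : p ∈ idealOfVars σ R := by
  simpa using (mem_pow_idealOfVars_iff' 1 p).mpr fun x hx => by
    rwa [(Finsupp.degree_eq_zero_iff x).mp (Nat.lt_one_iff.mp hx), ← constantCoeff_eq]

theorem idealOfVars_mul_span_monomial_image_le (G : Set (σ →₀ ℕ)) :
    idealOfVars σ R * Ideal.span ((fun a => monomial a (1 : R)) '' G) ≤
      Ideal.span ((fun a => monomial a (1 : R)) '' {e | ∃ w ∈ G, w < e}) := by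
  rw [idealOfVars, Ideal.span_mul_span', Ideal.span_le]
  rintro _ ⟨_, ⟨i, rfl⟩, _, ⟨w, hw, rfl⟩, rfl⟩
  refine Ideal.subset_span ⟨Finsupp.single i 1 + w, ⟨w, hw, ?_⟩, ?_⟩
  · exact lt_add_of_pos_left w (pos_iff_ne_zero.mpr (Finsupp.single_ne_zero.mpr one_ne_zero))
  · simp [X, monomial_mul]

theorem monomial_notMem_idealOfVars_mul_span [Nontrivial R] {G : Set (σ →₀ ℕ)}
    {u : σ →₀ ℕ} (hu : Minimal (· ∈ G) u) :
    monomial u (1 : R) ∉ idealOfVars σ R * Ideal.span ((fun a => monomial a (1 : R)) '' G) := by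
  intro h
  obtain ⟨e, ⟨w, hw, hwe⟩, heu⟩ :=
    monomial_mem_span_monomial_image_iff.mp (idealOfVars_mul_span_monomial_image_le G h)
  exact (hwe.trans_le heu).ne (hu.eq_of_le hw (hwe.le.trans heu))

theorem exists_constantCoeff_ne_zero_of_sum_mul_eq_monomial [Nontrivial R] {G : Set (σ →₀ ℕ)}
    {u : σ →₀ ℕ} (hu : Minimal (· ∈ G) u) {ι : Type*} [Fintype ι]
    (a r : ι → MvPolynomial σ R)
    (hr : ∀ i, r i ∈ Ideal.span ((fun a => monomial a (1 : R)) '' G))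
    (h : ∑ i, a i * r i = monomial u 1) : ∃ i, constantCoeff (a i) ≠ 0 := by
  by_contra! ha
  refine monomial_notMem_idealOfVars_mul_span hu (h ▸ Ideal.sum_mem _ fun i _ => ?_)
  exact Ideal.mul_mem_mul (mem_idealOfVars_of_constantCoeff_eq_zero (ha i)) (hr i)

end MvPolynomial

theorem MvPolynomial.not_isCI_span_monomial_image {σ R : Type} [CommRing R] [Nontrivial R]
    {G : Set (σ →₀ ℕ)} {u v : σ →₀ ℕ} (hu : Minimal (· ∈ G) u) (hv : Minimal (· ∈ G) v)
    (huv : u ≠ v) {y : σ} (huy : u y ≠ 0) (hvy : v y ≠ 0) :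
    ¬ IsCI (Ideal.span ((fun a => monomial a (1 : R)) '' G)) := by
  set J := Ideal.span ((fun a => monomial a (1 : R)) '' G)
  intro hJ
  obtain ⟨n, r, hr, hJr⟩ := hJ.exists_isWeaklyRegular_ofFn
  have hrJ : ∀ i, r i ∈ J := fun i => hJr ▸ Ideal.subset_span ⟨i, rfl⟩
  have hmem : ∀ w ∈ G, monomial w (1 : R) ∈ Ideal.span (Set.range r) :=
    fun w hw => hJr ▸ Ideal.subset_span ⟨w, hw, rfl⟩
  obtain ⟨a, ha⟩ := (Submodule.mem_span_range_iff_exists_fun _).mp (hmem u hu.prop)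
  obtain ⟨b, hb⟩ := (Submodule.mem_span_range_iff_exists_fun _).mp (hmem v hv.prop)
  simp only [smul_eq_mul] at ha hb
  -- `x^(v-g) x^u = x^(u-g) x^v` for `g = gcd(u, v)` turns the two expressions into a syzygy.
  set g := u ⊓ v
  set c : Fin n → MvPolynomial σ R :=
    fun i => monomial (v - g) 1 * a i - monomial (u - g) 1 * b i
  have hsyz : ∑ i, c i * r i = 0 := by
    simp only [c, sub_mul, mul_assoc, Finset.sum_sub_distrib, ← Finset.mul_sum, ha, hb,
      monomial_mul, one_mul, sub_eq_zero]
    suffices v - g + u = u - g + v by rw [this]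
    ext j
    simp only [Finsupp.add_apply, Finsupp.tsub_apply, Finsupp.inf_apply, g]
    omega
  have hcJ : ∀ i, c i ∈ J := hJr ▸ mem_span_range_of_sum_mul_eq_zero r hr c hsyz
  obtain ⟨i, hi⟩ := exists_constantCoeff_ne_zero_of_sum_mul_eq_monomial hu a r hrJ ha
  have hug : ¬ u - g ≤ v - g := fun h =>
    huv (hv.eq_of_le hu.prop ((tsub_le_tsub_iff_right inf_le_right).mp h))
  have hcoeff : coeff (v - g) (c i) ≠ 0 := by
    rwa [coeff_sub, coeff_monomial_mul', coeff_monomial_mul', if_pos le_rfl, if_neg hug,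
      tsub_self, one_mul, sub_zero, ← constantCoeff_eq]
  obtain ⟨w, hw, hwg⟩ := mem_ideal_span_monomial_image.mp (hcJ i) _ (mem_support_iff.mpr hcoeff)
  obtain rfl := hv.eq_of_le hw (hwg.trans tsub_le_self)
  have : w y ≤ w y - min (u y) (w y) := hwg y
  omega

theorem Finsupp.le_of_erase_le_erase {σ M : Type*} [Zero M] [LE M] {f g : σ →₀ M} {x : σ}
    (h : f.erase x ≤ g.erase x) (hx : f x ≤ g x) : f ≤ g := by
  intro j
  rcases eq_or_ne j x with rfl | hj
  · exact hx
  · simpa [Finsupp.erase_ne hj] using h j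

section IsMinGen

variable {k : Type} [Field k] {m : ℕ} {I : Ideal (MvPolynomial (Fin m) k)}
  {c w : Fin m →₀ ℕ}

theorem IsMinGen.monomial_notMem_of_le (hc : IsMinGen I c) (hwc : w ≤ c) {j : Fin m}
    (hj : w j < c j) : monomial w (1 : k) ∉ I := by
  refine fun hw => hc.2 j (by omega) (Ideal.mem_of_dvd _ ?_ hw)
  refine monomial_dvd_monomial.mpr ⟨Or.inr fun i => ?_, dvd_rfl⟩
  rcases eq_or_ne j i with rfl | hji
  · simp only [Finsupp.tsub_apply, Finsupp.single_eq_same]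
    omega
  · simpa [Finsupp.single_apply, hji] using hwc i

theorem IsMinGen.eq_of_le (hc : IsMinGen I c) (hw : monomial w (1 : k) ∈ I) (hwc : w ≤ c) :
    w = c := by
  by_contra hne
  obtain ⟨-, j, hj⟩ := Finsupp.lt_def.mp (hwc.lt_of_ne hne)
  exact hc.monomial_notMem_of_le hwc hj hw

theorem IsMinGen.apply_le_one (hI : IsSqFreeMonomialIdeal I) (hc : IsMinGen I c) (j : Fin m) :
    c j ≤ 1 := by
  obtain ⟨A, hA, rfl⟩ := hI
  obtain ⟨w, hw, hwc⟩ := monomial_mem_span_monomial_image_iff.mp hc.1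
  by_contra! hj
  exact hc.monomial_notMem_of_le hwc ((hA w hw j).trans_lt hj) (Ideal.subset_span ⟨w, hw, rfl⟩)

theorem IsMinGen.eq_of_erase_le (hI : IsSqFreeMonomialIdeal I) {p : Fin m →₀ ℕ}
    (hp : IsMinGen I p) {x : Fin m} (hpx : p x ≠ 0) (hc : IsMinGen I c)
    (hle : c.erase x ≤ p.erase x) : c = p := by
  refine hp.eq_of_le hc.1 (Finsupp.le_of_erase_le_erase hle ?_)
  have := hc.apply_le_one hI x
  omega

theorem IsMinGen.minimal_erase (hI : IsSqFreeMonomialIdeal I) {p : Fin m →₀ ℕ}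
    (hp : IsMinGen I p) {x : Fin m} (hpx : p x ≠ 0) :
    Minimal (· ∈ (fun a => a.erase x) '' {a | IsMinGen I a}) (p.erase x) := by
  refine ⟨⟨p, hp, rfl⟩, ?_⟩
  rintro _ ⟨c, hc, rfl⟩ hle
  rw [hp.eq_of_erase_le hI hpx hc hle]

end IsMinGen

/-- **Lemma.** If `I` is a nearly complete intersection and `m₁, m₂` are two distinct minimal
monomial generators of `I`, then their gcd has degree at most one, i.e. they have at most one
variable in common. -/
theorem nci_gcd_min_gens (k : Type) [Field k] (m : ℕ)
    (I : Ideal (MvPolynomial (Fin m) k)) (hI : IsNCI I)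
    (a b : Fin m →₀ ℕ) (ha : IsMinGen I a) (hb : IsMinGen I b) (hab : a ≠ b) :
    (a.support ∩ b.support).card ≤ 1 := by
  by_contra! hcard
  obtain ⟨x, hx, y, hy, hxy⟩ := Finset.one_lt_card.mp hcard
  simp only [Finset.mem_inter, Finsupp.mem_support_iff] at hx hy
  have hsq := hI.1
  have hCI : IsCI (subOne I x) := hI.2.2.2 x ⟨a, ha, hx.1⟩
  rw [subOne, ← Set.image_image (fun a => monomial a (1 : k))] at hCI
  refine not_isCI_span_monomial_image (ha.minimal_erase hsq hx.1) (hb.minimal_erase hsq hx.2)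
    (fun h => hab ?_) (y := y) ?_ ?_ hCI
  · exact hb.eq_of_erase_le hsq hx.2 ha h.le
  · simpa [Finsupp.erase_ne hxy.symm] using hy.1
  · simpa [Finsupp.erase_ne hxy.symm] using hy.2

end
end

section
/- Let I be a nearly complete intersection (NCI) squarefree monomial ideal of height c in S, all of whose associated primes have height c. Let x be a variable in the support of I, let xF_1, …, xF_n (n ≥ 2) be the minimal monomial generators of I divisible by x, let J be the ideal generated by the remaining minimal generators of I lying in (F_1, …, F_n), and let K be the ideal generated by the other remaining minimal generators. Then at most one of F_1, …, F_n has degree greater than 1; moreover, if F_n has degree greater than 1, then J ⊆ (F_1, …, F_{n−1}). -/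
open CategoryTheory MvPolynomial

noncomputable section

/-!
A monomial complete intersection has pairwise coprime minimal generators. If `x^u ≠ x^v` share a
variable, write them in a regular sequence generating the ideal; by regularity the coefficients of
the syzygy `x^(v-u) x^u = x^(u-v) x^v` lie in the ideal. Pairing them with the `x^u`-coefficients
of the regular sequence gives an element of the ideal whose `x^(v-u)`-coefficient is `1`, although
`x^(v-u)` properly divides `x^v`.

Apply this to the complete intersections `I(y=1)`. For `y = x` it makes `F_1, …, F_n` pairwise
coprime. If `F_i` is nonlinear and `y` is one of its variables, `x F_i / y` is a minimal generator
of `I(y=1)`. It shares a variable of `F_i` with `G / y` for every `x`-free minimal generator `G`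
divisible by `F_i`, which gives the inclusion of `J`. For a second nonlinear `F_j` it shares `x`
with the minimal generator of `I(y=1)` dividing `x F_j`, so that generator is `x`-free and divides
`y F_j`; in `I(x=1)` this contradicts coprimality with `F_j`.
-/

theorem RingTheory.Sequence.IsWeaklyRegular.mem_span_of_sum_mul_eq_zero {R : Type*} [CommRing R]
    {n : ℕ} {r : Fin n → R} (hr : IsWeaklyRegular R (List.ofFn r)) {c : Fin n → R}
    (hc : ∑ l, c l * r l = 0) (l : Fin n) : c l ∈ Ideal.span (Set.range r) := by
  induction n with
  | zero => exact l.elim0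
  | succ n ih =>
    rw [List.ofFn_succ', List.concat_eq_append, isWeaklyRegular_append_iff,
      isWeaklyRegular_singleton_iff, Ideal.smul_top_eq_map, Algebra.algebraMap_self,
      Ideal.map_id] at hr
    obtain ⟨hinit, hlast⟩ := hr
    set J := Ideal.ofList (List.ofFn fun i : Fin n => r i.castSucc)
    have hJ : J = Ideal.span (Set.range fun i : Fin n => r i.castSucc) := by
      simp only [J, Ideal.ofList, List.mem_ofFn]
      rfl
    have hJle : J ≤ Ideal.span (Set.range r) :=
      hJ ▸ Ideal.span_mono (Set.range_comp_subset_range _ _)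
    rw [Fin.sum_univ_castSucc] at hc
    have hlastJ : c (Fin.last n) ∈ J := by
      refine mem_of_isSMulRegular_quotient_of_smul_mem hlast ?_
      rw [smul_eq_mul, mul_comm, eq_neg_of_add_eq_zero_right hc, hJ]
      exact neg_mem <| Ideal.sum_mem _ fun i _ =>
        Ideal.mul_mem_left _ _ (Ideal.subset_span ⟨i, rfl⟩)
    obtain ⟨d, hd⟩ := (Submodule.mem_span_range_iff_exists_fun R).mp (hJ ▸ hlastJ)
    have hrel := ih hinit (c := fun i => c i.castSucc + d i * r (Fin.last n)) <| by
      rw [← hc, ← hd, Finset.sum_mul]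
      simp only [smul_eq_mul, add_mul, Finset.sum_add_distrib, mul_right_comm]
    induction l using Fin.lastCases with
    | last => exact hJle hlastJ
    | cast i =>
      rw [← add_sub_cancel_right (c i.castSucc) (d i * r (Fin.last n))]
      exact sub_mem (hJle (hJ ▸ hrel i)) (Ideal.mul_mem_left _ _ (Ideal.subset_span ⟨_, rfl⟩))

theorem IsCI.exists_isWeaklyRegular {R : Type} [CommRing R] {I : Ideal R} (hI : IsCI I) :
    ∃ (n : ℕ) (r : Fin n → R),
      RingTheory.Sequence.IsWeaklyRegular R (List.ofFn r) ∧ I = Ideal.span (Set.range r) := by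
  obtain ⟨rs, hreg, rfl⟩ := hI
  refine ⟨rs.length, rs.get, (List.ofFn_get rs).symm ▸ hreg.toIsWeaklyRegular, ?_⟩
  congr
  ext
  simp [List.mem_iff_get]

namespace Finsupp

variable {ι : Type*}

theorem exists_lt_apply_of_lt {b c : ι →₀ ℕ} (h : b < c) : ∃ j, b j < c j := by
  obtain ⟨j, hj⟩ := not_forall.1 (mt Finsupp.le_def.2 h.not_ge)
  exact ⟨j, Nat.lt_of_not_le hj⟩

theorem tsub_single_one_lt [DecidableEq ι] {c : ι →₀ ℕ} {j : ι} (hj : c j ≠ 0) :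
    c - single j 1 < c :=
  lt_of_le_not_ge tsub_le_self fun h => by
    have := Finsupp.le_def.1 h j
    simp only [tsub_apply, single_eq_same] at this
    omega

theorem erase_single_add {M : Type*} [AddZeroClass M] {a : ι} {b : M} {f : ι →₀ M}
    (hf : f a = 0) : (single a b + f).erase a = f := by
  rw [erase_add, erase_single, zero_add, erase_of_notMem_support (by simpa using hf)]

end Finsupp

theorem MvPolynomial.monomial_one_mem_span_monomial_iff {σ R : Type*} [CommSemiring R]
    [Nontrivial R] {T : Set (σ →₀ ℕ)} {a : σ →₀ ℕ} :
    monomial a (1 : R) ∈ Ideal.span ((fun w => monomial w (1 : R)) '' T) ↔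
      ∃ w ∈ T, w ≤ a := by
  classical
  simp [mem_ideal_span_monomial_image, support_monomial]

theorem exists_ne_apply_ne_zero_of_one_lt_expDeg {m : ℕ} {a : Fin m →₀ ℕ}
    (ha : ∀ j, a j ≤ 1) (h : 1 < expDeg a) (y : Fin m) : ∃ z, z ≠ y ∧ a z ≠ 0 := by
  by_contra! hz
  have hay : a = Finsupp.single y (a y) := by
    ext z
    rcases eq_or_ne z y with rfl | hzy
    · simp
    · simp [hzy.symm, hz z hzy]
  rw [hay, expDeg, Finsupp.sum_single_index rfl] at h
  exact absurd (ha y) (by omega)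

section MonomialIdeal

variable {k : Type} [Field k] {m : ℕ} {I : Ideal (MvPolynomial (Fin m) k)}

theorem IsMonomialIdeal.monomial_one_mem_of_mem_support (hI : IsMonomialIdeal I)
    {q : MvPolynomial (Fin m) k} (hq : q ∈ I) {a : Fin m →₀ ℕ} (ha : a ∈ q.support) :
    monomial a (1 : k) ∈ I := by
  obtain ⟨A, rfl⟩ := hI
  exact monomial_one_mem_span_monomial_iff.2 (mem_ideal_span_monomial_image.1 hq a ha)

namespace IsMinGen

variable {b v : Fin m →₀ ℕ}

theorem monomial_one_notMem_of_lt (hv : IsMinGen I v) (hb : b < v) :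
    monomial b (1 : k) ∉ I := by
  intro hmem
  obtain ⟨j, hj⟩ := Finsupp.exists_lt_apply_of_lt hb
  refine hv.2 j (by omega) (I.mem_of_dvd (monomial_one_dvd_monomial_one.2 fun i => ?_) hmem)
  have := Finsupp.le_def.1 hb.le i
  rcases eq_or_ne j i with rfl | hji
  · simp only [Finsupp.tsub_apply, Finsupp.single_eq_same]
    omega
  · simpa [Finsupp.single_apply, hji] using this

theorem eq_of_le_s12 (hv : IsMinGen I v) (hb : monomial b (1 : k) ∈ I) (hbv : b ≤ v) : b = v :=
  by_contra fun hne => hv.monomial_one_notMem_of_lt (lt_of_le_of_ne hbv hne) hb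

theorem mem_of_eq_span {T : Set (Fin m →₀ ℕ)}
    (hI : I = Ideal.span ((fun w => monomial w (1 : k)) '' T)) (hv : IsMinGen I v) : v ∈ T := by
  obtain ⟨w, hw, hwv⟩ := monomial_one_mem_span_monomial_iff.1 (hI ▸ hv.1)
  rwa [← hv.eq_of_le_s12 (hI ▸ monomial_one_mem_span_monomial_iff.2 ⟨w, hw, le_rfl⟩) hwv]

theorem coeff_mul (hI : IsMonomialIdeal I) (hv : IsMinGen I v) (p : MvPolynomial (Fin m) k)
    {q : MvPolynomial (Fin m) k} (hq : q ∈ I) : coeff v (p * q) = coeff 0 p * coeff v q := by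
  classical
  rw [MvPolynomial.coeff_mul, Finset.sum_eq_single (0, v)]
  · rintro ⟨c, d⟩ hcd hne
    rw [Finset.HasAntidiagonal.mem_antidiagonal] at hcd
    by_contra hprod
    have hd : d ∈ q.support := mem_support_iff.2 (right_ne_zero_of_mul hprod)
    have hdv : d ≠ v := fun h => hne (by simp_all)
    exact hv.monomial_one_notMem_of_lt (lt_of_le_of_ne (hcd ▸ le_add_self) hdv)
      (hI.monomial_one_mem_of_mem_support hq hd)
  · simp

theorem eq_of_apply_ne_zero_of_isWeaklyRegular (hI : IsMonomialIdeal I) {n : ℕ}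
    {r : Fin n → MvPolynomial (Fin m) k}
    (hr : RingTheory.Sequence.IsWeaklyRegular (MvPolynomial (Fin m) k) (List.ofFn r))
    (hIr : I = Ideal.span (Set.range r)) {u v : Fin m →₀ ℕ} (hu : IsMinGen I u)
    (hv : IsMinGen I v) {j : Fin m} (huj : u j ≠ 0) (hvj : v j ≠ 0) : u = v := by
  by_contra huv
  have hcomb (w) (hw : IsMinGen I w) :
      ∃ C : Fin n → MvPolynomial (Fin m) k, ∑ l, C l * r l = monomial w 1 := by
    have hw' : monomial w (1 : k) ∈ Ideal.span (Set.range r) := hIr ▸ hw.1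
    simpa using (Submodule.mem_span_range_iff_exists_fun _).1 hw'
  obtain ⟨Cu, hCu⟩ := hcomb u hu
  obtain ⟨Cv, hCv⟩ := hcomb v hv
  set a₀ := u - v
  set b₀ := v - u
  have hb₀ : b₀ < v := by
    refine lt_of_le_of_ne tsub_le_self fun h => ?_
    have := DFunLike.congr_fun h j
    simp only [b₀, Finsupp.tsub_apply] at this
    omega
  have ha₀ : ¬ a₀ ≤ b₀ := fun h => huv <| hv.eq_of_le_s12 hu.1 fun i => by
    have := Finsupp.le_def.1 h i
    simp only [a₀, b₀, Finsupp.tsub_apply] at this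
    omega
  have hsyz (l) : monomial b₀ 1 * Cu l - monomial a₀ 1 * Cv l ∈ I := by
    refine hIr ▸ hr.mem_span_of_sum_mul_eq_zero
      (c := fun l => monomial b₀ 1 * Cu l - monomial a₀ 1 * Cv l) ?_ l
    simp only [sub_mul, Finset.sum_sub_distrib, mul_assoc, ← Finset.mul_sum, hCu, hCv,
      monomial_mul, one_mul, sub_eq_zero]
    congr 2
    ext i
    simp only [a₀, b₀, Finsupp.add_apply, Finsupp.tsub_apply]
    omega
  -- as `a₀ ≰ b₀`, the `x^b₀`-coefficient of `P` is the `x^u`-coefficient of `∑ Cu l * r l`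
  set P := ∑ l, coeff u (r l) • (monomial b₀ 1 * Cu l - monomial a₀ 1 * Cv l)
  have hP : coeff b₀ P = 1 := by
    have hr (l) : r l ∈ I := hIr ▸ Ideal.subset_span ⟨l, rfl⟩
    simp only [P, coeff_sum, coeff_smul, coeff_sub, coeff_monomial_mul', le_rfl, ha₀, tsub_self,
      if_true, if_false, one_mul, sub_zero, smul_eq_mul]
    rw [← show coeff u (monomial u (1 : k)) = 1 by simp, ← hCu, coeff_sum]
    exact Finset.sum_congr rfl fun l _ => by rw [hu.coeff_mul hI _ (hr l), mul_comm]
  have hPI : P ∈ I := Ideal.sum_mem _ fun l _ => Submodule.smul_of_tower_mem _ _ (hsyz l)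
  exact hv.monomial_one_notMem_of_lt hb₀ <|
    hI.monomial_one_mem_of_mem_support hPI (by rw [mem_support_iff, hP]; exact one_ne_zero)

theorem eq_of_apply_ne_zero_of_isCI (hI : IsMonomialIdeal I) (hci : IsCI I) {u v : Fin m →₀ ℕ}
    (hu : IsMinGen I u) (hv : IsMinGen I v) {j : Fin m} (huj : u j ≠ 0) (hvj : v j ≠ 0) :
    u = v :=
  let ⟨_, _, hr, hIr⟩ := hci.exists_isWeaklyRegular
  hu.eq_of_apply_ne_zero_of_isWeaklyRegular hI hr hIr hv huj hvj

end IsMinGen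

theorem exists_isMinGen_le {c : Fin m →₀ ℕ} (hc : monomial c (1 : k) ∈ I) :
    ∃ v, IsMinGen I v ∧ v ≤ c := by
  induction c using WellFoundedLT.induction with
  | _ c ih =>
    by_cases hmin : IsMinGen I c
    · exact ⟨c, hmin, le_rfl⟩
    · obtain ⟨j, hj, hmem⟩ :
          ∃ j, c j ≠ 0 ∧ monomial (c - Finsupp.single j 1) (1 : k) ∈ I := by
        simpa [IsMinGen, hc] using hmin
      obtain ⟨v, hv, hvc⟩ := ih _ (Finsupp.tsub_single_one_lt hj) hmem
      exact ⟨v, hv, hvc.trans tsub_le_self⟩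

theorem IsSqFreeMonomialIdeal.isMinGen_apply_le_one (hI : IsSqFreeMonomialIdeal I)
    {v : Fin m →₀ ℕ} (hv : IsMinGen I v) (j : Fin m) : v j ≤ 1 := by
  obtain ⟨A, hA, rfl⟩ := hI
  exact hA v (hv.mem_of_eq_span rfl) j

section SubOne

variable {y : Fin m}

theorem subOne_eq_span : subOne I y =
    Ideal.span ((fun w => monomial w (1 : k)) '' ((·.erase y) '' {a | IsMinGen I a})) := by
  rw [subOne, Set.image_image]

theorem subOne_isMonomialIdeal : IsMonomialIdeal (subOne I y) :=
  ⟨_, subOne_eq_span⟩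

theorem IsMinGen.monomial_erase_mem_subOne {a : Fin m →₀ ℕ} (ha : IsMinGen I a) :
    monomial (a.erase y) (1 : k) ∈ subOne I y :=
  Ideal.subset_span ⟨a, ha, rfl⟩

theorem exists_isMinGen_subOne_le {c : Fin m →₀ ℕ} (hc : monomial c (1 : k) ∈ subOne I y) :
    ∃ a, IsMinGen I a ∧ IsMinGen (subOne I y) (a.erase y) ∧ a.erase y ≤ c := by
  obtain ⟨w, hw, hwc⟩ := exists_isMinGen_le hc
  obtain ⟨a, ha, rfl⟩ := hw.mem_of_eq_span subOne_eq_span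
  exact ⟨a, ha, hw, hwc⟩

theorem IsMinGen.erase_isMinGen_subOne {a : Fin m →₀ ℕ} (ha : IsMinGen I a) (hay : a y ≠ 0)
    (hsq : ∀ b, IsMinGen I b → b y ≤ 1) : IsMinGen (subOne I y) (a.erase y) := by
  classical
  refine ⟨ha.monomial_erase_mem_subOne, fun j hj hmem => ?_⟩
  obtain ⟨b, hb, -, hba⟩ := exists_isMinGen_subOne_le hmem
  have hjy : j ≠ y := by rintro rfl; simp at hj
  refine ha.2 j (by simpa [Finsupp.erase_apply, hjy] using hj)
    (I.mem_of_dvd (monomial_one_dvd_monomial_one.2 fun i => ?_) hb.1)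
  have hby := hsq b hb
  have := Finsupp.le_def.1 hba i
  simp only [Finsupp.tsub_apply, Finsupp.erase_apply, Finsupp.single_apply] at this ⊢
  split_ifs at this ⊢ <;> subst_vars <;> omega

end SubOne

end MonomialIdeal

section NearlyCompleteIntersection

variable {k : Type} [Field k] {m : ℕ} {I : Ideal (MvPolynomial (Fin m) k)} {t : Fin m}

theorem monomial_one_notMem_of_isMinGen_single_add {F : Fin m →₀ ℕ}
    (hF : IsMinGen I (Finsupp.single t 1 + F)) : monomial F (1 : k) ∉ I := by
  simpa using hF.2 t (by simp)

theorem isMinGen_subOne_of_isMinGen_single_add (hsq : ∀ a, IsMinGen I a → ∀ j, a j ≤ 1)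
    {F : Fin m →₀ ℕ} (hF : IsMinGen I (Finsupp.single t 1 + F)) (hFt : F t = 0) :
    IsMinGen (subOne I t) F :=
  Finsupp.erase_single_add hFt ▸ hF.erase_isMinGen_subOne (by simp [hFt]) fun b hb => hsq b hb t

/-- For variables `y ≠ y'` of `F`, the minimal generators `x F / y` and `G / y` of the complete
intersection `I(y=1)` share `y'`. -/
theorem not_le_of_one_lt_expDeg (hsq : ∀ a, IsMinGen I a → ∀ j, a j ≤ 1)
    (hci : ∀ y, InSupport I y → IsCI (subOne I y)) {F G : Fin m →₀ ℕ}
    (hF : IsMinGen I (Finsupp.single t 1 + F)) (hF1 : 1 < expDeg F) (hG : IsMinGen I G)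
    (hGt : G t = 0) : ¬ F ≤ G := by
  classical
  intro hFG
  have hFsq (j) : F j ≤ 1 := (Finsupp.le_def.1 le_add_self j).trans (hsq _ hF j)
  obtain ⟨y, hyt, hy⟩ := exists_ne_apply_ne_zero_of_one_lt_expDeg hFsq hF1 t
  obtain ⟨y', hy'y, hy'⟩ := exists_ne_apply_ne_zero_of_one_lt_expDeg hFsq hF1 y
  have hxFy : (Finsupp.single t 1 + F : Fin m →₀ ℕ) y ≠ 0 := by simp [hyt.symm, hy]
  have hGy : G y ≠ 0 := by have := Finsupp.le_def.1 hFG y; omega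
  have := (hF.erase_isMinGen_subOne hxFy fun b hb => hsq b hb y).eq_of_apply_ne_zero_of_isCI
    subOne_isMonomialIdeal (hci y ⟨_, hF, hxFy⟩)
    (hG.erase_isMinGen_subOne hGy fun b hb => hsq b hb y) (j := y')
    (by simp [hy'y, hy']) (by have := Finsupp.le_def.1 hFG y'; simp [hy'y]; omega)
  simpa [Finsupp.erase_apply, hyt.symm, hGt] using DFunLike.congr_fun this t

/-- The minimal generator of `I(y=1)` dividing `x G` is `x`-free, or it would be `x F / y`. -/
theorem exists_isMinGen_le_single_add (hsq : ∀ a, IsMinGen I a → ∀ j, a j ≤ 1)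
    (hci : ∀ y, InSupport I y → IsCI (subOne I y)) {y : Fin m} {F G : Fin m →₀ ℕ}
    (hF : IsMinGen I (Finsupp.single t 1 + F)) (hG : IsMinGen I (Finsupp.single t 1 + G))
    (hFt : F t = 0) (hFy : F y ≠ 0) (hGy : G y = 0) (hFG : ¬ F.erase y ≤ G) :
    ∃ b, IsMinGen I b ∧ b t = 0 ∧ b ≤ Finsupp.single y 1 + G := by
  classical
  have hyt : y ≠ t := by rintro rfl; exact hFy hFt
  have hxFy : (Finsupp.single t 1 + F : Fin m →₀ ℕ) y ≠ 0 := by simp [hyt.symm, hFy]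
  have hmem : monomial (Finsupp.single t 1 + G) (1 : k) ∈ subOne I y := by
    simpa [Finsupp.erase_of_notMem_support, hyt.symm, hGy] using
      hG.monomial_erase_mem_subOne (y := y)
  obtain ⟨b, hb, hbmin, hble⟩ := exists_isMinGen_subOne_le hmem
  have hbt : b t = 0 := by
    by_contra hbt
    have heq := (hF.erase_isMinGen_subOne hxFy fun a ha => hsq a ha y).eq_of_apply_ne_zero_of_isCI
      subOne_isMonomialIdeal (hci y ⟨_, hF, hxFy⟩) hbmin (j := t)
      (by simp [hyt.symm]) (by simpa [Finsupp.erase_apply, hyt.symm] using hbt)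
    refine hFG fun z => ?_
    have := Finsupp.le_def.1 (heq ▸ hble) z
    simp only [Finsupp.erase_apply, Finsupp.add_apply, Finsupp.single_apply] at this ⊢
    split_ifs at this ⊢ <;> omega
  refine ⟨b, hb, hbt, fun z => ?_⟩
  have hbz := Finsupp.le_def.1 hble z
  have hbz1 := hsq b hb z
  simp only [Finsupp.erase_apply, Finsupp.add_apply, Finsupp.single_apply] at hbz ⊢
  split_ifs at hbz ⊢ <;> subst_vars <;> omega

section Generators

variable {n : ℕ} {f : Fin n → Fin m →₀ ℕ}

theorem eq_of_apply_ne_zero_of_isCI_subOne (hsq : ∀ a, IsMinGen I a → ∀ j, a j ≤ 1)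
    (hci : ∀ y, InSupport I y → IsCI (subOne I y)) (hinj : Function.Injective f)
    (hfx : ∀ i, f i t = 0) (hF : ∀ i, IsMinGen I (Finsupp.single t 1 + f i)) {i l : Fin n}
    {z : Fin m} (hi : f i z ≠ 0) (hl : f l z ≠ 0) : i = l :=
  hinj <| (isMinGen_subOne_of_isMinGen_single_add hsq (hF i) (hfx i)).eq_of_apply_ne_zero_of_isCI
    subOne_isMonomialIdeal (hci t ⟨_, hF i, by simp [hfx]⟩)
    (isMinGen_subOne_of_isMinGen_single_add hsq (hF l) (hfx l)) hi hl

/-- An `x`-free minimal generator `b` dividing `y F_j` is a minimal generator of `I(x=1)`,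
sharing a variable with `F_j`, unless some `F_l` divides it; then `l = j` as `y ∉ F_l`. -/
theorem not_le_single_add_of_isMinGen (hsq : ∀ a, IsMinGen I a → ∀ j, a j ≤ 1)
    (hdeg : ∀ a, IsMinGen I a → 2 ≤ expDeg a)
    (hci : ∀ y, InSupport I y → IsCI (subOne I y))
    (hinj : Function.Injective f) (hfx : ∀ i, f i t = 0)
    (hgens : ∀ a, (IsMinGen I a ∧ a t ≠ 0) ↔ ∃ i, a = Finsupp.single t 1 + f i)
    {i j : Fin n} {y : Fin m} (hy : f i y ≠ 0) (hFG : ¬ (f i).erase y ≤ f j)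
    (hj : 1 < expDeg (f j)) {b : Fin m →₀ ℕ} (hb : IsMinGen I b) (hbt : b t = 0) :
    ¬ b ≤ Finsupp.single y 1 + f j := by
  classical
  intro hbyj
  have hF (l) : IsMinGen I (Finsupp.single t 1 + f l) := ((hgens _).2 ⟨l, rfl⟩).1
  have hcop {l l' : Fin n} {z : Fin m} : f l z ≠ 0 → f l' z ≠ 0 → l = l' :=
    eq_of_apply_ne_zero_of_isCI_subOne hsq hci hinj hfx hF
  have hbmem : monomial b (1 : k) ∈ subOne I t := by
    simpa [Finsupp.erase_of_notMem_support, hbt] using hb.monomial_erase_mem_subOne (y := t)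
  obtain ⟨a, ha, hamin, hab⟩ := exists_isMinGen_subOne_le hbmem
  by_cases hat : a t = 0
  · rw [Finsupp.erase_of_notMem_support (by simpa using hat)] at hamin hab
    obtain rfl := hb.eq_of_le_s12 ha.1 hab
    obtain ⟨z, hzy, hz⟩ := exists_ne_apply_ne_zero_of_one_lt_expDeg (hsq a ha) (hdeg a ha) y
    have hjz : f j z ≠ 0 := by
      have := Finsupp.le_def.1 hbyj z
      simp [hzy.symm] at this
      omega
    have := hamin.eq_of_apply_ne_zero_of_isCI subOne_isMonomialIdeal
      (hci t ⟨_, hF j, by simp [hfx]⟩)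
      (isMinGen_subOne_of_isMinGen_single_add hsq (hF j) (hfx j)) hz hjz
    exact monomial_one_notMem_of_isMinGen_single_add (hF j) (this ▸ ha.1)
  · obtain ⟨l, rfl⟩ := (hgens a).1 ⟨ha, hat⟩
    rw [Finsupp.erase_single_add (hfx l)] at hab
    obtain ⟨z, hzt, hz⟩ := exists_ne_apply_ne_zero_of_one_lt_expDeg (hsq _ ha) (hdeg _ ha) t
    have hlz : f l z ≠ 0 := by simpa [hzt.symm] using hz
    have hlyj := Finsupp.le_def.1 (hab.trans hbyj)
    rcases eq_or_ne z y with rfl | hzy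
    · obtain rfl := hcop hy hlz
      refine hFG fun w => ?_
      have := hlyj w
      simp only [Finsupp.erase_apply, Finsupp.add_apply, Finsupp.single_apply] at this ⊢
      split_ifs at this ⊢ <;> omega
    · have hjz : f j z ≠ 0 := by
        have := hlyj z
        simp [hzy.symm] at this
        omega
      obtain rfl := hcop hlz hjz
      exact not_le_of_one_lt_expDeg hsq hci (hF l) hj hb hbt hab

theorem eq_of_one_lt_expDeg (hsq : ∀ a, IsMinGen I a → ∀ j, a j ≤ 1)
    (hdeg : ∀ a, IsMinGen I a → 2 ≤ expDeg a)
    (hci : ∀ y, InSupport I y → IsCI (subOne I y))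
    (hinj : Function.Injective f) (hfx : ∀ i, f i t = 0)
    (hgens : ∀ a, (IsMinGen I a ∧ a t ≠ 0) ↔ ∃ i, a = Finsupp.single t 1 + f i)
    {i j : Fin n} (hi : 1 < expDeg (f i)) (hj : 1 < expDeg (f j)) : i = j := by
  classical
  by_contra hij
  have hF (l) : IsMinGen I (Finsupp.single t 1 + f l) := ((hgens _).2 ⟨l, rfl⟩).1
  have hcop {l l' : Fin n} {z : Fin m} : f l z ≠ 0 → f l' z ≠ 0 → l = l' :=
    eq_of_apply_ne_zero_of_isCI_subOne hsq hci hinj hfx hF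
  have hisq (z) : f i z ≤ 1 := (Finsupp.le_def.1 le_add_self z).trans (hsq _ (hF i) z)
  obtain ⟨y, -, hy⟩ := exists_ne_apply_ne_zero_of_one_lt_expDeg hisq hi t
  obtain ⟨y', hy'y, hy'⟩ := exists_ne_apply_ne_zero_of_one_lt_expDeg hisq hi y
  have hFG : ¬ (f i).erase y ≤ f j := fun h => by
    have := Finsupp.le_def.1 h y'
    have := mt (hcop hy') hij
    simp_all
  obtain ⟨b, hb, hbt, hble⟩ := exists_isMinGen_le_single_add hsq hci (hF i) (hF j) (hfx i) hy
    (by_contra fun h => hij (hcop hy h)) hFG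
  exact not_le_single_add_of_isMinGen hsq hdeg hci hinj hfx hgens hy hFG hj hb hbt hble

end Generators

end NearlyCompleteIntersection

theorem nci_at_most_one_nonlinear_general (k : Type) [Field k] (m : ℕ)
    (I : Ideal (MvPolynomial (Fin m) k)) (t : Fin m)
    (hI : IsNCI I)
    (n : ℕ) (f : Fin n → (Fin m →₀ ℕ)) (hinj : Function.Injective f)
    (hfx : ∀ i, f i t = 0)
    (hgens : ∀ a, (IsMinGen I a ∧ a t ≠ 0) ↔ ∃ i, a = Finsupp.single t 1 + f i)
    (J : Ideal (MvPolynomial (Fin m) k))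
    (hJ : J = Ideal.span ((fun a => monomial a (1 : k)) ''
      {a | IsMinGen I a ∧ a t = 0 ∧
        monomial a (1 : k) ∈
          Ideal.span (Set.range fun i => monomial (f i) (1 : k))})) :
    (∀ i j, 1 < expDeg (f i) → 1 < expDeg (f j) → i = j) ∧
    (∀ i, 1 < expDeg (f i) →
      J ≤ Ideal.span ((fun j => monomial (f j) (1 : k)) '' {j | j ≠ i})) := by
  obtain ⟨hsqI, hdeg, -, hci⟩ := hI
  have hsq (a) (ha : IsMinGen I a) := hsqI.isMinGen_apply_le_one ha
  refine ⟨fun i j hi hj => eq_of_one_lt_expDeg hsq hdeg hci hinj hfx hgens hi hj,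
    fun i hi => ?_⟩
  rw [hJ, Ideal.span_le]
  rintro _ ⟨a, ⟨ha, hat, haF⟩, rfl⟩
  rw [Set.range_comp' (fun w => monomial w (1 : k)) f] at haF
  obtain ⟨_, ⟨l, rfl⟩, hla⟩ := monomial_one_mem_span_monomial_iff.1 haF
  have hli : l ≠ i := by
    rintro rfl
    exact not_le_of_one_lt_expDeg hsq hci ((hgens _).2 ⟨l, rfl⟩).1 hi ha hat hla
  rw [SetLike.mem_coe, ← Set.image_image (fun w => monomial w (1 : k)) f]
  exact monomial_one_mem_span_monomial_iff.2 ⟨f l, ⟨l, hli, rfl⟩, hla⟩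

/-- **Lemma.** In the situation of Notation (⋆) — `I` an NCI of height `c` with all associated
primes of height `c`, `xF_1, …, xF_n` the minimal generators divisible by `x`, `J` generated
by the remaining minimal generators lying in `(F_1, …, F_n)` — at most one of the `F_i` has
degree greater than one, and if `F_i` has degree greater than one then
`J ⊆ (F_1, …, F_{i-1}, F_{i+1}, …, F_n)` (in the paper, `i = n`). -/
theorem nci_at_most_one_nonlinear (k : Type) [Field k] (m : ℕ)
    (I : Ideal (MvPolynomial (Fin m) k)) (c : ℕ) (t : Fin m)
    (hI : IsNCI I) (hht : idealHeight I = c)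
    (hassoc : ∀ P ∈ associatedPrimes (MvPolynomial (Fin m) k)
      (MvPolynomial (Fin m) k ⧸ I), idealHeight P = c)
    (hsup : InSupport I t)
    (n : ℕ) (hn : 2 ≤ n) (f : Fin n → (Fin m →₀ ℕ)) (hinj : Function.Injective f)
    (hfx : ∀ i, f i t = 0)
    (hgens : ∀ a, (IsMinGen I a ∧ a t ≠ 0) ↔ ∃ i, a = Finsupp.single t 1 + f i)
    (J : Ideal (MvPolynomial (Fin m) k))
    (hJ : J = Ideal.span ((fun a => monomial a (1 : k)) ''
      {a | IsMinGen I a ∧ a t = 0 ∧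
        monomial a (1 : k) ∈
          Ideal.span (Set.range fun i => monomial (f i) (1 : k))})) :
    (∀ i j, 1 < expDeg (f i) → 1 < expDeg (f j) → i = j) ∧
    (∀ i, 1 < expDeg (f i) →
      J ≤ Ideal.span ((fun j => monomial (f j) (1 : k)) '' {j | j ≠ i})) :=
  nci_at_most_one_nonlinear_general k m I t hI n f hinj hfx hgens J hJ

end
end
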